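/- arXiv:1608.06910 — 7 statements merged into one kernel-verified Lean document; each statement's English description precedes it below -/
import Mathlib

section
/- Let Π be a ground epistemic logic program (without classical negation), let r be a rule of Π of the form H ← B⁺, not B⁻, K L₁, not K L₂, M L₃, not M L₄, let W be a nonempty collection of sets of atoms of Π, and let A ∈ W. If there exists an atom ℓ ∈ L₁ such that W ⊭ K ℓ, then there is no reduct of r in (Π^W)^A, and in (SE(Π)^{Φ_W})^A there is either no reduct of r or the reduct of r is a useless rule. -/
universe u

/-- A ground epistemic logic program rule (no classical negation):
`H ← B⁺, not B⁻, K L₁, not K L₂, M L₃, not M L₄`,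
where `head = H`, `bpos = B⁺`, `bneg = B⁻`. -/
structure ELPRule (α : Type u) where
  head : Set α
  bpos : Set α
  bneg : Set α
  L1 : Set α
  L2 : Set α
  L3 : Set α
  L4 : Set α

/-- All components of a rule are finite sets of atoms. -/
def ELPRule.RuleFinite {α : Type u} (r : ELPRule α) : Prop :=
  r.head.Finite ∧ r.bpos.Finite ∧ r.bneg.Finite ∧
    r.L1.Finite ∧ r.L2.Finite ∧ r.L3.Finite ∧ r.L4.Finite

/-- An ASP rule with disjunctive head `head`, positive body `pos`, default-negated
body `neg`, doubly default-negated (`not not`) body `nneg`, and a flag `bot`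
recording that the body contains the conjunct `¬⊤` (falsum). -/
structure NRule (α : Type u) where
  head : Set α
  pos : Set α
  neg : Set α
  nneg : Set α
  bot : Prop

/-- A rule of a (Gelfond–Lifschitz) reduct: disjunctive head, positive body, and a flag
`bot` recording that the body contains the conjunct `¬⊤` (a useless rule). -/
structure PRule (α : Type u) where
  head : Set α
  pos : Set α
  bot : Prop

variable {α : Type u}

/-- `W ⊨ K ℓ`. -/
def satK (W : Set (Set α)) (l : α) : Prop := ∀ A ∈ W, l ∈ A
/-- `W ⊨ not K ℓ`. -/
def satNotK (W : Set (Set α)) (l : α) : Prop := ∃ A ∈ W, l ∉ A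
/-- `W ⊨ M ℓ`. -/
def satM (W : Set (Set α)) (l : α) : Prop := ∃ A ∈ W, l ∈ A
/-- `W ⊨ not M ℓ`. -/
def satNotM (W : Set (Set α)) (l : α) : Prop := ∀ A ∈ W, l ∉ A

/-- Epistemic negations: `not K ℓ` (constructor `notK`) and `M ℓ` (constructor `m`). -/
inductive EpNeg (α : Type u) where
  | notK : α → EpNeg α
  | m : α → EpNeg α

/-- `Ep(Π)`: the epistemic negations occurring in the program. -/
def Ep (P : Set (ELPRule α)) : Set (EpNeg α) :=
  {e | ∃ r ∈ P, (∃ l ∈ r.L1 ∪ r.L2, e = EpNeg.notK l) ∨ (∃ l ∈ r.L3 ∪ r.L4, e = EpNeg.m l)}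

/-- Satisfaction of an epistemic negation by `W`. -/
def epSat (W : Set (Set α)) : EpNeg α → Prop
  | EpNeg.notK l => satNotK W l
  | EpNeg.m l => satM W l

/-- `Φ_W = {φ ∈ Ep(Π) : W ⊨ φ}`. -/
def PhiW (P : Set (ELPRule α)) (W : Set (Set α)) : Set (EpNeg α) :=
  {e | e ∈ Ep P ∧ epSat W e}

/-- The KLS (modal) reduct of rule `r` with respect to `W`: the empty set if the rule is
deleted (some `K ℓ`, `ℓ ∈ L₁`, or some `not M ℓ`, `ℓ ∈ L₄`, is unsatisfied), and otherwise
the singleton of the rule obtained by the replacement table: `K ℓ ↦ ℓ`, satisfied `not K ℓ`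
removed and unsatisfied `not K ℓ ↦ not ℓ`, satisfied `M ℓ` removed and unsatisfied
`M ℓ ↦ not not ℓ`, `not M ℓ ↦ not ℓ`. -/
def modalRuleReduct (W : Set (Set α)) (r : ELPRule α) : Set (NRule α) :=
  {R | (∀ l ∈ r.L1, satK W l) ∧ (∀ l ∈ r.L4, satNotM W l) ∧
    R = ⟨r.head, r.bpos ∪ r.L1,
         r.bneg ∪ {l ∈ r.L2 | ¬ satNotK W l} ∪ r.L4,
         {l ∈ r.L3 | ¬ satM W l}, False⟩}

/-- The Shen–Eiter epistemic reduct `SE(r)^Φ` of (the SE translation of) rule `r` with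
respect to a set `Φ` of epistemic negations: each epistemic negation whose counterpart is
in `Φ` is replaced by `⊤` and the others by default negation of their argument, with
`¬¬ℓ` treated as `ℓ`; an occurrence of `¬⊤` is recorded in the `bot` flag (useless rule). -/
def seRuleReduct (Φ : Set (EpNeg α)) (r : ELPRule α) : NRule α :=
  ⟨r.head,
   r.bpos ∪ {l ∈ r.L1 | EpNeg.notK l ∉ Φ} ∪ {l ∈ r.L3 | EpNeg.m l ∉ Φ},
   r.bneg ∪ {l ∈ r.L2 | EpNeg.notK l ∉ Φ} ∪ {l ∈ r.L4 | EpNeg.m l ∉ Φ},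
   ∅,
   (∃ l ∈ r.L1, EpNeg.notK l ∈ Φ) ∨ (∃ l ∈ r.L4, EpNeg.m l ∈ Φ)⟩

/-- Gelfond–Lifschitz transformation (with the Lifschitz–Tang–Turner treatment of
`not not ℓ`, via fresh atoms `not_ℓ`) of an ASP rule with respect to `A`: the rule is
deleted if some `not ℓ` in its body has `ℓ ∈ A` or some `not not ℓ` has `ℓ ∉ A`;
otherwise the default-negated body parts are removed. -/
def glRuleReduct (A : Set α) (R : NRule α) : Set (PRule α) :=
  {Q | (∀ l ∈ R.neg, l ∉ A) ∧ (∀ l ∈ R.nneg, l ∈ A) ∧ Q = ⟨R.head, R.pos, R.bot⟩}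

/-- The reduct of `r` in `(Π^W)^A` (KLS side). -/
def klsReductOf (W : Set (Set α)) (A : Set α) (r : ELPRule α) : Set (PRule α) :=
  {Q | ∃ R ∈ modalRuleReduct W r, Q ∈ glRuleReduct A R}

/-- The reduct of `r` in `(SE(Π)^{Φ_W})^A` (Shen–Eiter side). -/
def seReductOf (P : Set (ELPRule α)) (W : Set (Set α)) (A : Set α) (r : ELPRule α) :
    Set (PRule α) :=
  glRuleReduct A (seRuleReduct (PhiW P W) r)

/-- A useless rule: its body contains the conjunct `¬⊤`. -/
def PRule.useless (Q : PRule α) : Prop := Q.bot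

/-- A rule useless with respect to `A`: its body contains `¬⊤` or a positive atom not in `A`. -/
def PRule.uselessWrt (A : Set α) (Q : PRule α) : Prop :=
  Q.bot ∨ ∃ l ∈ Q.pos, l ∉ A

/-- A positive (reduct) rule is satisfied by `S`. -/
def PRuleSat (S : Set α) (Q : PRule α) : Prop :=
  ¬ Q.bot → Q.pos ⊆ S → ∃ h ∈ Q.head, h ∈ S

/-- The Gelfond–Lifschitz reduct of a program with respect to `A`. -/
def progGLReduct (P : Set (NRule α)) (A : Set α) : Set (PRule α) :=
  {Q | ∃ R ∈ P, Q ∈ glRuleReduct A R}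

/-- `S` is a model of a positive program. -/
def modelOf (S : Set α) (P : Set (PRule α)) : Prop := ∀ Q ∈ P, PRuleSat S Q

/-- `A` is an answer set of the program `P`: `A` is a minimal model of the reduct `P^A`. -/
def isAnswerSet (P : Set (NRule α)) (A : Set α) : Prop :=
  modelOf A (progGLReduct P A) ∧ ∀ B ⊂ A, ¬ modelOf B (progGLReduct P A)

/-- `AS(P)`: the set of all answer sets of `P`. -/
def AS (P : Set (NRule α)) : Set (Set α) := {A | isAnswerSet P A}

/-- The modal (KLS) reduct `Π^W` of a program. -/
def modalProgReduct (P : Set (ELPRule α)) (W : Set (Set α)) : Set (NRule α) :=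
  {R | ∃ r ∈ P, R ∈ modalRuleReduct W r}

/-- The Shen–Eiter epistemic reduct `SE(Π)^{Φ_W}` of a program. -/
def seProgReduct (P : Set (ELPRule α)) (W : Set (Set α)) : Set (NRule α) :=
  {R | ∃ r ∈ P, R = seRuleReduct (PhiW P W) r}

/-- **Lemma 1.** If some `ℓ ∈ L₁` of `r` has `W ⊭ K ℓ`, then there is no reduct of `r` in
`(Π^W)^A`, and in `(SE(Π)^{Φ_W})^A` there is either no reduct of `r` or the reduct of `r`
is a useless rule. -/
theorem lemma1_no_kls_reduct_and_se_useless {α : Type u}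
    (Prog : Set (ELPRule α)) (hProgFin : Prog.Finite)
    (hRulesFin : ∀ r ∈ Prog, r.RuleFinite)
    (r : ELPRule α) (hr : r ∈ Prog)
    (W : Set (Set α)) (hW : W.Nonempty)
    (A : Set α) (hA : A ∈ W)
    (h : ∃ l ∈ r.L1, ¬ satK W l) :
    klsReductOf W A r = ∅ ∧
      (seReductOf Prog W A r = ∅ ∨ ∀ Q ∈ seReductOf Prog W A r, Q.useless) := by
  obtain ⟨l, hl, hnK⟩ := h
  constructor
  · ext Q
    simp only [klsReductOf, Set.mem_setOf_eq, Set.mem_empty_iff_false, iff_false, not_exists]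
    rintro R ⟨⟨hK, -, -⟩, -⟩
    exact hnK (hK l hl)
  · right
    rintro Q ⟨-, -, hQ⟩
    have hsat : satNotK W l := by
      simpa [satK, satNotK, not_forall] using hnK
    have hΦ : EpNeg.notK l ∈ PhiW Prog W :=
      ⟨⟨r, hr, Or.inl ⟨l, Or.inl hl, rfl⟩⟩, hsat⟩
    subst hQ
    exact Or.inl ⟨l, hl, hΦ⟩
end

section
/- Let Π be a ground epistemic logic program (without classical negation), let r be a rule of Π of the form H ← B⁺, not B⁻, K L₁, not K L₂, M L₃, not M L₄, let W be a nonempty collection of sets of atoms of Π, and let A ∈ W. If there exists an atom ℓ ∈ L₃ such that W ⊭ M ℓ, then each of (Π^W)^A and (SE(Π)^{Φ_W})^A either contains no reduct of r or contains only a useless reduct of r with respect to A. -/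
universe u

variable {α : Type u}

/-- **Lemma 3.** If some `ℓ ∈ L₃` of `r` has `W ⊭ M ℓ`, then each of `(Π^W)^A` and
`(SE(Π)^{Φ_W})^A` either contains no reduct of `r` or contains only a useless reduct of
`r` with respect to `A`. -/
theorem lemma3_no_reduct_or_useless_wrt {α : Type u}
    (Prog : Set (ELPRule α)) (hProgFin : Prog.Finite)
    (hRulesFin : ∀ r ∈ Prog, r.RuleFinite)
    (r : ELPRule α) (hr : r ∈ Prog)
    (W : Set (Set α)) (hW : W.Nonempty)
    (A : Set α) (hA : A ∈ W)
    (h : ∃ l ∈ r.L3, ¬ satM W l) :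
    (klsReductOf W A r = ∅ ∨ ∀ Q ∈ klsReductOf W A r, Q.uselessWrt A) ∧
      (seReductOf Prog W A r = ∅ ∨ ∀ Q ∈ seReductOf Prog W A r, Q.uselessWrt A) := by
  obtain ⟨l, hl3, hlM⟩ := h
  have hlA : l ∉ A := fun hmem => hlM ⟨A, hA, hmem⟩
  constructor
  · right
    rintro Q ⟨R, ⟨h1, h4, rfl⟩, hneg, hnneg, rfl⟩
    exact absurd (hnneg l ⟨hl3, hlM⟩) hlA
  · right
    rintro Q ⟨hneg, hnneg, rfl⟩
    right
    exact ⟨l, Or.inr ⟨hl3, fun hmem => hlM hmem.2⟩, hlA⟩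
end

section
/- Let Π be a ground epistemic logic program (without classical negation), let r be a rule of Π of the form H ← B⁺, not B⁻, K L₁, not K L₂, M L₃, not M L₄, let W be a nonempty collection of sets of atoms of Π, and let A ∈ W. If there exists an atom ℓ ∈ L₄ such that W ⊭ not M ℓ, then (Π^W)^A contains no reduct of r, and (SE(Π)^{Φ_W})^A contains either no reduct of r or only a useless reduct of r. -/
universe u

variable {α : Type u}

/-- **Lemma 4.** If some `ℓ ∈ L₄` of `r` has `W ⊭ not M ℓ`, then `(Π^W)^A` contains no
reduct of `r`, and `(SE(Π)^{Φ_W})^A` contains either no reduct of `r` or only a useless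
reduct of `r`. -/
theorem lemma4_no_kls_reduct_and_se_useless {α : Type u}
    (Prog : Set (ELPRule α)) (hProgFin : Prog.Finite)
    (hRulesFin : ∀ r ∈ Prog, r.RuleFinite)
    (r : ELPRule α) (hr : r ∈ Prog)
    (W : Set (Set α)) (hW : W.Nonempty)
    (A : Set α) (hA : A ∈ W)
    (h : ∃ l ∈ r.L4, ¬ satNotM W l) :
    klsReductOf W A r = ∅ ∧
      (seReductOf Prog W A r = ∅ ∨ ∀ Q ∈ seReductOf Prog W A r, Q.useless) := by
  obtain ⟨l, hl4, hnot⟩ := h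
  constructor
  · ext Q
    simp only [klsReductOf, Set.mem_setOf_eq, Set.mem_empty_iff_false, iff_false]
    rintro ⟨R, ⟨-, hR4, -⟩, -⟩
    exact hnot (hR4 l hl4)
  · right
    intro Q hQ
    obtain ⟨-, -, hQeq⟩ := hQ
    have hM : satM W l := by
      simpa [satNotM, satM, not_forall] using hnot
    have hPhi : EpNeg.m l ∈ PhiW Prog W := by
      refine ⟨⟨r, hr, Or.inr ⟨l, Or.inr hl4, rfl⟩⟩, hM⟩
    subst hQeq
    exact Or.inr ⟨l, hl4, hPhi⟩
end

section
/- For every ground epistemic logic program Π and every nonempty collection W of consistent sets of ground literals, the epistemic reduct of Π with respect to Φ_W coincides with the modal reduct of Π with respect to W; that is, Π^{Φ_W} = Π^W. -/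
universe u

variable {α : Type u}

/-- A ground literal: an atom or a classically negated atom. -/
inductive Lit (β : Type u) where
  | pos : β → Lit β
  | neg : β → Lit β

/-- A set of literals is consistent if it contains no complementary pair. -/
def consistent {β : Type u} (A : Set (Lit β)) : Prop :=
  ∀ a : β, ¬ (Lit.pos a ∈ A ∧ Lit.neg a ∈ A)

/-- Answer sets of a program over literals: consistent answer sets. -/
def ASL {β : Type u} (P : Set (NRule (Lit β))) : Set (Set (Lit β)) :=
  {A | consistent A ∧ isAnswerSet P A}

/-- The epistemic reduct (Definition 5) of rule `r` with respect to `Φ ⊆ E` (where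
`E = Ep(Π)` and `Ψ = E \ Φ`): the subjective literals in `Φ` and the complements of
those in `Ψ` are regarded as satisfied, the subjective literals in `Ψ` and the
complements of those in `Φ` as unsatisfied, and the modal-reduct replacement/deletion
table is applied. The result is empty if the rule is deleted, a singleton otherwise. -/
def epRuleReduct {α : Type u} (E Φ : Set (EpNeg α)) (r : ELPRule α) : Set (NRule α) :=
  {R | (∀ l ∈ r.L1, EpNeg.notK l ∈ E \ Φ) ∧ (∀ l ∈ r.L4, EpNeg.m l ∈ E \ Φ) ∧
    R = ⟨r.head, r.bpos ∪ r.L1,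
         r.bneg ∪ {l ∈ r.L2 | EpNeg.notK l ∉ Φ} ∪ r.L4,
         {l ∈ r.L3 | EpNeg.m l ∉ Φ}, False⟩}

/-- The epistemic reduct `Π^Φ` of a program with respect to `Φ ⊆ Ep(Π)`. -/
def epProgReduct {α : Type u} (P : Set (ELPRule α)) (Φ : Set (EpNeg α)) : Set (NRule α) :=
  {R | ∃ r ∈ P, R ∈ epRuleReduct (Ep P) Φ r}

/-- For every ground epistemic logic program `Π` and every nonempty collection `W` of
consistent sets of ground literals, the epistemic reduct of `Π` with respect to `Φ_W`
coincides with the modal reduct of `Π` with respect to `W`: `Π^{Φ_W} = Π^W`. -/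
theorem epistemicReduct_PhiW_eq_modalReduct {β : Type u}
    (Prog : Set (ELPRule (Lit β))) (hProgFin : Prog.Finite)
    (hRulesFin : ∀ r ∈ Prog, r.RuleFinite)
    (W : Set (Set (Lit β))) (hW : W.Nonempty)
    (hcons : ∀ A ∈ W, consistent A) :
    epProgReduct Prog (PhiW Prog W) = modalProgReduct Prog W := by
  have key : ∀ r ∈ Prog,
      epRuleReduct (Ep Prog) (PhiW Prog W) r = modalRuleReduct W r := by
    intro r hr
    have hEpK : ∀ l ∈ r.L1 ∪ r.L2, EpNeg.notK l ∈ Ep Prog := by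
      intro l hl
      exact ⟨r, hr, Or.inl ⟨l, hl, rfl⟩⟩
    have hEpM : ∀ l ∈ r.L3 ∪ r.L4, EpNeg.m l ∈ Ep Prog := by
      intro l hl
      exact ⟨r, hr, Or.inr ⟨l, hl, rfl⟩⟩
    have hK : ∀ l : Lit β, satK W l ↔ ¬ satNotK W l := by
      intro l
      unfold satK satNotK
      push_neg
      rfl
    have hM : ∀ l : Lit β, satNotM W l ↔ ¬ satM W l := by
      intro l
      unfold satNotM satM
      push_neg
      rfl
    have hPhiK : ∀ l : Lit β, l ∈ r.L1 ∪ r.L2 →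
        (EpNeg.notK l ∈ PhiW Prog W ↔ satNotK W l) := by
      intro l hl
      exact ⟨fun h => h.2, fun h => ⟨hEpK l hl, h⟩⟩
    have hPhiM : ∀ l : Lit β, l ∈ r.L3 ∪ r.L4 →
        (EpNeg.m l ∈ PhiW Prog W ↔ satM W l) := by
      intro l hl
      exact ⟨fun h => h.2, fun h => ⟨hEpM l hl, h⟩⟩
    ext R
    simp only [epRuleReduct, modalRuleReduct, Set.mem_setOf_eq]
    constructor
    · rintro ⟨h1, h4, hR⟩
      refine ⟨fun l hl => ?_, fun l hl => ?_, ?_⟩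
      · have := h1 l hl
        rw [hK]
        intro hs
        exact this.2 ⟨hEpK l (Or.inl hl), hs⟩
      · have := h4 l hl
        rw [hM]
        intro hs
        exact this.2 ⟨hEpM l (Or.inr hl), hs⟩
      · rw [hR]
        congr 1
        · congr 1
          congr 1
          ext l
          simp only [Set.mem_setOf_eq]
          exact and_congr_right fun hl => not_congr (hPhiK l (Or.inr hl))
        · ext l
          simp only [Set.mem_setOf_eq]
          exact and_congr_right fun hl => not_congr (hPhiM l (Or.inl hl))
    · rintro ⟨h1, h4, hR⟩
      refine ⟨fun l hl => ?_, fun l hl => ?_, ?_⟩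
      · refine ⟨hEpK l (Or.inl hl), fun hc => ?_⟩
        exact ((hK l).mp (h1 l hl)) hc.2
      · refine ⟨hEpM l (Or.inr hl), fun hc => ?_⟩
        exact ((hM l).mp (h4 l hl)) hc.2
      · rw [hR]
        congr 1
        · congr 1
          congr 1
          ext l
          simp only [Set.mem_setOf_eq]
          exact and_congr_right fun hl => (not_congr (hPhiK l (Or.inr hl))).symm
        · ext l
          simp only [Set.mem_setOf_eq]
          exact and_congr_right fun hl => (not_congr (hPhiM l (Or.inl hl))).symm
  ext R
  simp only [epProgReduct, modalProgReduct, Set.mem_setOf_eq]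
  constructor
  · rintro ⟨r, hr, hmem⟩
    exact ⟨r, hr, (key r hr) ▸ hmem⟩
  · rintro ⟨r, hr, hmem⟩
    exact ⟨r, hr, (key r hr) ▸ hmem⟩
end

section
/- Let Π be a ground epistemic logic program and W a nonempty collection of consistent sets of ground literals. Then W is a world view of Π in the sense that W = AS(Π^W) and there is no W′ with W′ = AS(Π^{W′}) and Φ_{W′} ⊋ Φ_W, if and only if there exists Φ ⊆ Ep(Π) such that W = AS(Π^Φ), Φ is reduct-verifiable, and there is no reduct-verifiable Φ′ ⊆ Ep(Π) with Φ′ ⊋ Φ. -/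
universe u

variable {α : Type u}

/-- `Φ` is reduct-verifiable for `Π`: letting `V = AS(Π^Φ)`, `V ≠ ∅` and `Φ_V = Φ`. -/
def reductVerifiable {β : Type u} (Prog : Set (ELPRule (Lit β)))
    (Φ : Set (EpNeg (Lit β))) : Prop :=
  ASL (epProgReduct Prog Φ) ≠ ∅ ∧ PhiW Prog (ASL (epProgReduct Prog Φ)) = Φ

lemma mem_Ep_notK {α : Type u} {P : Set (ELPRule α)} {r : ELPRule α} (hr : r ∈ P) {l : α}
    (hl : l ∈ r.L1 ∪ r.L2) : EpNeg.notK l ∈ Ep P := ⟨r, hr, Or.inl ⟨l, hl, rfl⟩⟩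

lemma mem_Ep_m {α : Type u} {P : Set (ELPRule α)} {r : ELPRule α} (hr : r ∈ P) {l : α}
    (hl : l ∈ r.L3 ∪ r.L4) : EpNeg.m l ∈ Ep P := ⟨r, hr, Or.inr ⟨l, hl, rfl⟩⟩

lemma PhiW_subset_Ep {α : Type u} (P : Set (ELPRule α)) (W : Set (Set α)) :
    PhiW P W ⊆ Ep P := fun _ he => he.1

lemma modalRule_eq_epRule {α : Type u} {P : Set (ELPRule α)} (W : Set (Set α))
    {r : ELPRule α} (hr : r ∈ P) :
    modalRuleReduct W r = epRuleReduct (Ep P) (PhiW P W) r := by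
  have hK : ∀ l ∈ r.L1 ∪ r.L2, (EpNeg.notK l ∈ PhiW P W ↔ satNotK W l) := fun l hl =>
    ⟨fun h => h.2, fun h => ⟨mem_Ep_notK hr hl, h⟩⟩
  have hM : ∀ l ∈ r.L3 ∪ r.L4, (EpNeg.m l ∈ PhiW P W ↔ satM W l) := fun l hl =>
    ⟨fun h => h.2, fun h => ⟨mem_Ep_m hr hl, h⟩⟩
  have hnK : ∀ l : α, ¬ satNotK W l ↔ satK W l := by
    intro l; simp [satNotK, satK]
  have hnM : ∀ l : α, ¬ satM W l ↔ satNotM W l := by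
    intro l; simp [satM, satNotM]
  have hS2 : {l ∈ r.L2 | ¬ satNotK W l} = {l ∈ r.L2 | EpNeg.notK l ∉ PhiW P W} := by
    ext l
    exact and_congr_right fun hl => ((not_congr (hK l (Or.inr hl))).symm)
  have hS3 : {l ∈ r.L3 | ¬ satM W l} = {l ∈ r.L3 | EpNeg.m l ∉ PhiW P W} := by
    ext l
    exact and_congr_right fun hl => ((not_congr (hM l (Or.inl hl))).symm)
  have h1 : ∀ l ∈ r.L1, (satK W l ↔ EpNeg.notK l ∈ Ep P \ PhiW P W) := by
    intro l hl
    constructor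
    · intro h
      exact ⟨mem_Ep_notK hr (Or.inl hl),
        fun hΦ => ((hnK l).2 h) ((hK l (Or.inl hl)).1 hΦ)⟩
    · intro h
      exact (hnK l).1 fun hs => h.2 ((hK l (Or.inl hl)).2 hs)
  have h4 : ∀ l ∈ r.L4, (satNotM W l ↔ EpNeg.m l ∈ Ep P \ PhiW P W) := by
    intro l hl
    constructor
    · intro h
      exact ⟨mem_Ep_m hr (Or.inr hl),
        fun hΦ => ((hnM l).2 h) ((hM l (Or.inr hl)).1 hΦ)⟩
    · intro h
      exact (hnM l).1 fun hs => h.2 ((hM l (Or.inr hl)).2 hs)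
  ext R
  simp only [modalRuleReduct, epRuleReduct, Set.mem_setOf_eq, hS2, hS3]
  exact and_congr (forall₂_congr h1) (and_congr (forall₂_congr h4) Iff.rfl)

lemma modalProg_eq_epProg {α : Type u} (P : Set (ELPRule α)) (W : Set (Set α)) :
    modalProgReduct P W = epProgReduct P (PhiW P W) := by
  ext R
  constructor
  · rintro ⟨r, hr, hR⟩; exact ⟨r, hr, (modalRule_eq_epRule W hr) ▸ hR⟩
  · rintro ⟨r, hr, hR⟩; exact ⟨r, hr, (modalRule_eq_epRule W hr).symm ▸ hR⟩

/-- The two definitions of a world view coincide: `W` satisfies `W = AS(Π^W)` together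
with the maximality requirement (no `W′` with `W′ = AS(Π^{W′})` and `Φ_{W′} ⊋ Φ_W`) if
and only if there is a maximal reduct-verifiable `Φ ⊆ Ep(Π)` with `W = AS(Π^Φ)`. -/
theorem worldview_def_iff_alt_worldview_def {β : Type u}
    (Prog : Set (ELPRule (Lit β))) (hProgFin : Prog.Finite)
    (hRulesFin : ∀ r ∈ Prog, r.RuleFinite)
    (W : Set (Set (Lit β))) (hW : W.Nonempty)
    (hcons : ∀ A ∈ W, consistent A) :
    (W = ASL (modalProgReduct Prog W) ∧
        ¬ ∃ W' : Set (Set (Lit β)), W'.Nonempty ∧ (∀ A ∈ W', consistent A) ∧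
            W' = ASL (modalProgReduct Prog W') ∧ PhiW Prog W ⊂ PhiW Prog W') ↔
      (∃ Φ ⊆ Ep Prog, W = ASL (epProgReduct Prog Φ) ∧ reductVerifiable Prog Φ ∧
          ¬ ∃ Φ' ⊆ Ep Prog, reductVerifiable Prog Φ' ∧ Φ ⊂ Φ') := by
  constructor
  · rintro ⟨hWeq, hmax⟩
    refine ⟨PhiW Prog W, PhiW_subset_Ep Prog W, ?_, ?_, ?_⟩
    · rw [← modalProg_eq_epProg]; exact hWeq
    · constructor
      · rw [← modalProg_eq_epProg, ← hWeq]
        exact hW.ne_empty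
      · rw [← modalProg_eq_epProg, ← hWeq]
    · rintro ⟨Φ', hΦ'E, ⟨hne, hfix⟩, hsub⟩
      set W' := ASL (epProgReduct Prog Φ') with hW'def
      have hW'ne : W'.Nonempty := Set.nonempty_iff_ne_empty.2 hne
      have hW'cons : ∀ A ∈ W', consistent A := fun A hA => hA.1
      have hW'eq : W' = ASL (modalProgReduct Prog W') := by
        rw [modalProg_eq_epProg, hfix]
      exact hmax ⟨W', hW'ne, hW'cons, hW'eq, hfix ▸ hsub⟩
  · rintro ⟨Φ, hΦE, hWeq, ⟨hne, hfix⟩, hmax⟩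
    have hPhiW : PhiW Prog W = Φ := by rw [hWeq]; exact hfix
    constructor
    · rw [modalProg_eq_epProg, hPhiW]; exact hWeq
    · rintro ⟨W', hW'ne, hW'cons, hW'eq, hsub⟩
      refine hmax ⟨PhiW Prog W', PhiW_subset_Ep Prog W', ⟨?_, ?_⟩, hPhiW ▸ hsub⟩
      · rw [← modalProg_eq_epProg, ← hW'eq]
        exact hW'ne.ne_empty
      · rw [← modalProg_eq_epProg, ← hW'eq]
end

section
/- Let E be a finite set and V a family of subsets of E. Process all subsets of E one at a time, in any order in which cardinalities are nonincreasing, maintaining a collection Ω initialized to the empty collection as follows: when processing a subset Φ, if Φ is a strict subset of some member of Ω then skip Φ; otherwise, add Φ to Ω if and only if Φ ∈ V. Then after all subsets of E have been processed, Ω is exactly the set of ⊆-maximal elements of V (i.e., the set of Φ ∈ V such that no Φ′ ∈ V satisfies Φ′ ⊋ Φ). -/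
/-- **Correctness of the level-ordered, pruned search.**
Let `E` be a finite set and `V` a family of subsets of `E`. Enumerate all `2^|E|`
subsets of `E` as `Φ 0, Φ 1, …` in an order of nonincreasing cardinality. Maintain a
collection `Ω`, initially empty: when processing `Φ i`, if `Φ i` is a strict subset of
some member of the current collection then skip it; otherwise add it exactly when
`Φ i ∈ V`. Then at the end `Ω` is exactly the set of `⊆`-maximal elements of `V`. -/
theorem pruned_level_search_computes_maximal_elements {α : Type*}
    (E : Finset α) (V : Set (Finset α)) (hV : ∀ S ∈ V, S ⊆ E)
    (Φ : Fin (2 ^ E.card) → Finset α)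
    (hsub : ∀ i, Φ i ⊆ E)
    (hinj : Function.Injective Φ)
    (hsurj : ∀ S : Finset α, S ⊆ E → ∃ i, Φ i = S)
    (hord : ∀ i j : Fin (2 ^ E.card), i ≤ j → (Φ j).card ≤ (Φ i).card)
    (Ω : ℕ → Set (Finset α))
    (hΩ0 : Ω 0 = ∅)
    (hΩstep : ∀ i : Fin (2 ^ E.card),
      ((∃ ψ ∈ Ω i, Φ i ⊂ ψ) → Ω (↑i + 1) = Ω ↑i) ∧
      ((¬ ∃ ψ ∈ Ω i, Φ i ⊂ ψ) →
        (Φ i ∈ V → Ω (↑i + 1) = insert (Φ i) (Ω ↑i)) ∧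
        (Φ i ∉ V → Ω (↑i + 1) = Ω ↑i))) :
    Ω (2 ^ E.card) = {S | S ∈ V ∧ ¬ ∃ S' ∈ V, S ⊂ S'} := by
  classical
  have hVfin : V.Finite :=
    Set.Finite.subset (Finset.finite_toSet E.powerset)
      (by intro S hS; simp only [Finset.coe_powerset, Set.mem_preimage,
            Set.mem_powerset_iff, Finset.coe_subset]; exact hV S hS)
  -- every element of V is contained in some ⊆-maximal element of V
  have hexmax : ∀ S ∈ V, ∃ M, (M ∈ V ∧ ¬ ∃ X ∈ V, M ⊂ X) ∧ S ⊆ M := by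
    intro S hS
    obtain ⟨M, hMmem, hMmax⟩ :=
      Finset.exists_max_image (hVfin.toFinset.filter (fun T => S ⊆ T)) Finset.card
        ⟨S, by simp [hS]⟩
    simp only [Finset.mem_filter, Set.Finite.mem_toFinset] at hMmem
    refine ⟨M, ⟨hMmem.1, ?_⟩, hMmem.2⟩
    rintro ⟨X, hXV, hMX⟩
    have hXmem : X ∈ hVfin.toFinset.filter (fun T => S ⊆ T) := by
      simp only [Finset.mem_filter, Set.Finite.mem_toFinset]
      exact ⟨hXV, hMmem.2.trans hMX.subset⟩
    exact absurd (hMmax X hXmem) (not_le.mpr (Finset.card_lt_card hMX))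
  -- the invariant
  have key : ∀ n, n ≤ 2 ^ E.card →
      Ω n = {S | (S ∈ V ∧ ¬ ∃ S' ∈ V, S ⊂ S') ∧
        ∃ j : Fin (2 ^ E.card), (j : ℕ) < n ∧ Φ j = S} := by
    intro n
    induction n with
    | zero => intro _; rw [hΩ0]; ext S; simp
    | succ n ih =>
      intro hn
      have hn' : n < 2 ^ E.card := hn
      set i : Fin (2 ^ E.card) := ⟨n, hn'⟩ with hi
      have ihn := ih (le_of_lt hn')
      have hstep := hΩstep i
      by_cases hsk : ∃ ψ ∈ Ω (i : ℕ), Φ i ⊂ ψ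
      · -- skipped: Φ i is below some member of Ω, hence not maximal
        obtain ⟨ψ, hψΩ, hψsub⟩ := hsk
        rw [ihn] at hψΩ
        have hnotmax : ¬ (Φ i ∈ V ∧ ¬ ∃ S' ∈ V, Φ i ⊂ S') := by
          rintro ⟨-, hmax⟩
          exact hmax ⟨ψ, hψΩ.1.1, hψsub⟩
        rw [hstep.1 ⟨ψ, by rw [ihn]; exact hψΩ, hψsub⟩, ihn]
        ext S
        simp only [Set.mem_setOf_eq]
        constructor
        · rintro ⟨hm, j, hj, hjS⟩; exact ⟨hm, j, Nat.lt_succ_of_lt hj, hjS⟩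
        · rintro ⟨hm, j, hj, hjS⟩
          refine ⟨hm, j, ?_, hjS⟩
          rcases Nat.lt_succ_iff_lt_or_eq.mp hj with h | h
          · exact h
          · exfalso
            have hji : j = i := by apply Fin.ext; simpa [hi] using h
            rw [hji] at hjS
            rw [← hjS] at hm
            exact hnotmax hm
      · -- not skipped
        by_cases hmem : Φ i ∈ V
        · -- Φ i ∈ V: it is in fact maximal
          have hmax : ¬ ∃ S' ∈ V, Φ i ⊂ S' := by
            rintro ⟨S', hS'V, hS'sub⟩
            obtain ⟨M, hMmax, hS'M⟩ := hexmax S' hS'V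
            obtain ⟨j, hjM⟩ := hsurj M (hV M hMmax.1)
            have hsubM : Φ i ⊂ M := hS'sub.trans_subset hS'M
            have hcard : (Φ i).card < (Φ j).card := by
              rw [hjM]; exact Finset.card_lt_card hsubM
            have hji : j < i := by
              by_contra h
              exact absurd (hord i j (not_lt.mp h)) (not_le.mpr hcard)
            exact hsk ⟨M, by rw [ihn]; exact ⟨hMmax, j, hji, hjM⟩, hsubM⟩
          rw [(hstep.2 hsk).1 hmem, ihn]
          ext S
          simp only [Set.mem_insert_iff, Set.mem_setOf_eq]
          constructor
          · rintro (rfl | ⟨hm, j, hj, hjS⟩)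
            · exact ⟨⟨hmem, hmax⟩, i, Nat.lt_succ_self n, rfl⟩
            · exact ⟨hm, j, Nat.lt_succ_of_lt hj, hjS⟩
          · rintro ⟨hm, j, hj, hjS⟩
            rcases Nat.lt_succ_iff_lt_or_eq.mp hj with h | h
            · exact Or.inr ⟨hm, j, h, hjS⟩
            · have hji : j = i := by apply Fin.ext; simpa [hi] using h
              left; rw [← hjS, hji]
        · -- Φ i ∉ V
          rw [(hstep.2 hsk).2 hmem, ihn]
          ext S
          simp only [Set.mem_setOf_eq]
          constructor
          · rintro ⟨hm, j, hj, hjS⟩; exact ⟨hm, j, Nat.lt_succ_of_lt hj, hjS⟩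
          · rintro ⟨hm, j, hj, hjS⟩
            refine ⟨hm, j, ?_, hjS⟩
            rcases Nat.lt_succ_iff_lt_or_eq.mp hj with h | h
            · exact h
            · exfalso
              have hji : j = i := by apply Fin.ext; simpa [hi] using h
              rw [hji] at hjS
              rw [← hjS] at hm
              exact hmem hm.1
  rw [key _ le_rfl]
  ext S
  simp only [Set.mem_setOf_eq]
  constructor
  · rintro ⟨hm, -⟩; exact hm
  · intro hm
    obtain ⟨j, hjS⟩ := hsurj S (hV S hm.1)
    exact ⟨hm, j, j.isLt, hjS⟩
end

section
/- Let Π be a ground epistemic logic program, let Π′ be the ASP translation of Π, and for Φ ⊆ Ep(Π) let ASP(Φ) be the set of facts encoding Φ. Then the answer sets of Π″ = Π′ ∪ ASP(Φ), taken modulo the fresh k- /m-literals, are exactly the answer sets of the epistemic reduct Π^Φ; that is, AS(Π″) restricted to the original literals of Π equals AS(Π^Φ). -/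
universe u

variable {α : Type u}

/-- Atoms of the translated program: the original atoms plus the fresh k/m-atoms
`k_ℓ, k0_ℓ, k1_ℓ, m_ℓ, m0_ℓ, m1_ℓ` for literals `ℓ` of the original program. -/
inductive XAtom (β : Type u) where
  | orig : β → XAtom β
  | k : Lit β → XAtom β
  | k0 : Lit β → XAtom β
  | k1 : Lit β → XAtom β
  | m : Lit β → XAtom β
  | m0 : Lit β → XAtom β
  | m1 : Lit β → XAtom β

/-- Embedding of the original literals into the literals of the extended vocabulary. -/
def emb {β : Type u} : Lit β → Lit (XAtom β)
  | Lit.pos a => Lit.pos (XAtom.orig a)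
  | Lit.neg a => Lit.neg (XAtom.orig a)

/-- The translation of a single ELP rule: `K ℓ` is replaced by `not ¬k_ℓ, ℓ`;
`not K ℓ` by `¬k_ℓ`; `M ℓ` by `m_ℓ`; `not M ℓ` by `not m_ℓ`. -/
def trRule {β : Type u} (r : ELPRule (Lit β)) : NRule (Lit (XAtom β)) :=
  ⟨emb '' r.head,
   emb '' r.bpos ∪ emb '' r.L1 ∪
     (fun l => Lit.neg (XAtom.k l)) '' r.L2 ∪ (fun l => Lit.pos (XAtom.m l)) '' r.L3,
   emb '' r.bneg ∪
     (fun l => Lit.neg (XAtom.k l)) '' r.L1 ∪ (fun l => Lit.pos (XAtom.m l)) '' r.L4,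
   ∅, False⟩

/-- Added rule `¬k_ℓ ← k0_ℓ`. -/
def kAux1 {β : Type u} (l : Lit β) : NRule (Lit (XAtom β)) :=
  ⟨{Lit.neg (XAtom.k l)}, {Lit.pos (XAtom.k0 l)}, ∅, ∅, False⟩

/-- Added rule `¬k_ℓ ← k1_ℓ, not ℓ`. -/
def kAux2 {β : Type u} (l : Lit β) : NRule (Lit (XAtom β)) :=
  ⟨{Lit.neg (XAtom.k l)}, {Lit.pos (XAtom.k1 l)}, {emb l}, ∅, False⟩

/-- Added rule `m_ℓ ← m1_ℓ`. -/
def mAux1 {β : Type u} (l : Lit β) : NRule (Lit (XAtom β)) :=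
  ⟨{Lit.pos (XAtom.m l)}, {Lit.pos (XAtom.m1 l)}, ∅, ∅, False⟩

/-- Added rule `m_ℓ ← m0_ℓ, not not ℓ`. -/
def mAux2 {β : Type u} (l : Lit β) : NRule (Lit (XAtom β)) :=
  ⟨{Lit.pos (XAtom.m l)}, {Lit.pos (XAtom.m0 l)}, ∅, {emb l}, False⟩

/-- The ASP translation `Π′` of `Π`: each rule is translated (rules without subjective
literals are left unchanged by this), and the auxiliary rules for the fresh k/m-atoms
are added for each literal whose epistemic negation occurs in `Π`. -/
def translation {β : Type u} (P : Set (ELPRule (Lit β))) : Set (NRule (Lit (XAtom β))) :=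
  {R | ∃ r ∈ P, R = trRule r} ∪
    {R | ∃ l : Lit β, EpNeg.notK l ∈ Ep P ∧ (R = kAux1 l ∨ R = kAux2 l)} ∪
    {R | ∃ l : Lit β, EpNeg.m l ∈ Ep P ∧ (R = mAux1 l ∨ R = mAux2 l)}

/-- A fact: a rule with a single head literal and an empty body. -/
def factRule {γ : Type u} (a : γ) : NRule γ := ⟨{a}, ∅, ∅, ∅, False⟩

/-- `ASP(Φ)`: for each `not K ℓ ∈ Ep(Π)` the fact `k0_ℓ` if `not K ℓ ∈ Φ` and the fact
`k1_ℓ` otherwise; for each `M ℓ ∈ Ep(Π)` the fact `m1_ℓ` if `M ℓ ∈ Φ` and the fact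
`m0_ℓ` otherwise. -/
def aspFacts {β : Type u} (P : Set (ELPRule (Lit β))) (Φ : Set (EpNeg (Lit β))) :
    Set (NRule (Lit (XAtom β))) :=
  {R | ∃ l : Lit β, EpNeg.notK l ∈ Ep P ∧
        ((EpNeg.notK l ∈ Φ ∧ R = factRule (Lit.pos (XAtom.k0 l))) ∨
         (EpNeg.notK l ∉ Φ ∧ R = factRule (Lit.pos (XAtom.k1 l))))} ∪
    {R | ∃ l : Lit β, EpNeg.m l ∈ Ep P ∧
        ((EpNeg.m l ∈ Φ ∧ R = factRule (Lit.pos (XAtom.m1 l))) ∨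
         (EpNeg.m l ∉ Φ ∧ R = factRule (Lit.pos (XAtom.m0 l))))}


namespace KMTrans

variable {β : Type u}

lemma emb_inj : Function.Injective (emb : Lit β → Lit (XAtom β)) := by
  intro x y h
  cases x <;> cases y <;> simp_all [emb]

/-- The fresh (k/m) part of the intended answer set over the extended vocabulary. -/
def extFresh (P : Set (ELPRule (Lit β))) (Φ : Set (EpNeg (Lit β))) (B : Set (Lit β)) :
    Lit (XAtom β) → Prop
  | Lit.pos (XAtom.k0 l) => EpNeg.notK l ∈ Ep P ∧ EpNeg.notK l ∈ Φ
  | Lit.pos (XAtom.k1 l) => EpNeg.notK l ∈ Ep P ∧ EpNeg.notK l ∉ Φ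
  | Lit.neg (XAtom.k l) => EpNeg.notK l ∈ Ep P ∧ (EpNeg.notK l ∈ Φ ∨ l ∉ B)
  | Lit.pos (XAtom.m1 l) => EpNeg.m l ∈ Ep P ∧ EpNeg.m l ∈ Φ
  | Lit.pos (XAtom.m0 l) => EpNeg.m l ∈ Ep P ∧ EpNeg.m l ∉ Φ
  | Lit.pos (XAtom.m l) => EpNeg.m l ∈ Ep P ∧ (EpNeg.m l ∈ Φ ∨ l ∈ B)
  | _ => False

/-- The intended answer set of the translated program corresponding to `B`. -/
def XS (P : Set (ELPRule (Lit β))) (Φ : Set (EpNeg (Lit β))) (B : Set (Lit β)) :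
    Set (Lit (XAtom β)) :=
  emb '' B ∪ {x | extFresh P Φ B x}

variable {P : Set (ELPRule (Lit β))} {Φ : Set (EpNeg (Lit β))} {B S : Set (Lit β)}

lemma extFresh_emb (l : Lit β) : ¬ extFresh P Φ B (emb l) := by
  cases l <;> exact fun h => h

lemma emb_mem_union (l : Lit β) :
    emb l ∈ emb '' S ∪ {x | extFresh P Φ B x} ↔ l ∈ S := by
  constructor
  · rintro (⟨y, hy, h⟩ | h)
    · rwa [← emb_inj h]
    · exact absurd h (extFresh_emb l)
  · exact fun h => Or.inl ⟨l, h, rfl⟩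

lemma negk_mem_union (l : Lit β) :
    Lit.neg (XAtom.k l) ∈ emb '' S ∪ {x | extFresh P Φ B x} ↔
      (EpNeg.notK l ∈ Ep P ∧ (EpNeg.notK l ∈ Φ ∨ l ∉ B)) := by
  constructor
  · rintro (⟨y, hy, h⟩ | h)
    · cases y <;> simp [emb] at h
    · exact h
  · exact fun h => Or.inr h

lemma posk0_mem_union (l : Lit β) :
    Lit.pos (XAtom.k0 l) ∈ emb '' S ∪ {x | extFresh P Φ B x} ↔
      (EpNeg.notK l ∈ Ep P ∧ EpNeg.notK l ∈ Φ) := by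
  constructor
  · rintro (⟨y, hy, h⟩ | h)
    · cases y <;> simp [emb] at h
    · exact h
  · exact fun h => Or.inr h

lemma posk1_mem_union (l : Lit β) :
    Lit.pos (XAtom.k1 l) ∈ emb '' S ∪ {x | extFresh P Φ B x} ↔
      (EpNeg.notK l ∈ Ep P ∧ EpNeg.notK l ∉ Φ) := by
  constructor
  · rintro (⟨y, hy, h⟩ | h)
    · cases y <;> simp [emb] at h
    · exact h
  · exact fun h => Or.inr h

lemma posm_mem_union (l : Lit β) :
    Lit.pos (XAtom.m l) ∈ emb '' S ∪ {x | extFresh P Φ B x} ↔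
      (EpNeg.m l ∈ Ep P ∧ (EpNeg.m l ∈ Φ ∨ l ∈ B)) := by
  constructor
  · rintro (⟨y, hy, h⟩ | h)
    · cases y <;> simp [emb] at h
    · exact h
  · exact fun h => Or.inr h

lemma posm0_mem_union (l : Lit β) :
    Lit.pos (XAtom.m0 l) ∈ emb '' S ∪ {x | extFresh P Φ B x} ↔
      (EpNeg.m l ∈ Ep P ∧ EpNeg.m l ∉ Φ) := by
  constructor
  · rintro (⟨y, hy, h⟩ | h)
    · cases y <;> simp [emb] at h
    · exact h
  · exact fun h => Or.inr h

lemma posm1_mem_union (l : Lit β) :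
    Lit.pos (XAtom.m1 l) ∈ emb '' S ∪ {x | extFresh P Φ B x} ↔
      (EpNeg.m l ∈ Ep P ∧ EpNeg.m l ∈ Φ) := by
  constructor
  · rintro (⟨y, hy, h⟩ | h)
    · cases y <;> simp [emb] at h
    · exact h
  · exact fun h => Or.inr h

lemma orig_XS : {l : Lit β | emb l ∈ XS P Φ B} = B := by
  ext l; exact emb_mem_union l

lemma notK_mem_Ep {r : ELPRule (Lit β)} (hr : r ∈ P) {l : Lit β}
    (h : l ∈ r.L1 ∪ r.L2) : EpNeg.notK l ∈ Ep P :=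
  ⟨r, hr, Or.inl ⟨l, h, rfl⟩⟩

lemma m_mem_Ep {r : ELPRule (Lit β)} (hr : r ∈ P) {l : Lit β}
    (h : l ∈ r.L3 ∪ r.L4) : EpNeg.m l ∈ Ep P :=
  ⟨r, hr, Or.inr ⟨l, h, rfl⟩⟩

lemma consistent_XS (h : consistent B) : consistent (XS P Φ B) := by
  intro a ha
  obtain ⟨hp, hn⟩ := ha
  cases a with
  | orig b =>
      exact h b ⟨(emb_mem_union (Lit.pos b)).mp hp, (emb_mem_union (Lit.neg b)).mp hn⟩
  | k l =>
      rcases hp with ⟨y, hy, hey⟩ | hf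
      · cases y <;> simp [emb] at hey
      · exact hf
  | k0 l =>
      rcases hn with ⟨y, hy, hey⟩ | hf
      · cases y <;> simp [emb] at hey
      · exact hf
  | k1 l =>
      rcases hn with ⟨y, hy, hey⟩ | hf
      · cases y <;> simp [emb] at hey
      · exact hf
  | m l =>
      rcases hn with ⟨y, hy, hey⟩ | hf
      · cases y <;> simp [emb] at hey
      · exact hf
  | m0 l =>
      rcases hn with ⟨y, hy, hey⟩ | hf
      · cases y <;> simp [emb] at hey
      · exact hf
  | m1 l =>
      rcases hn with ⟨y, hy, hey⟩ | hf
      · cases y <;> simp [emb] at hey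
      · exact hf

/-! Membership of the various rules in the translated program. -/

lemma trRule_mem {r : ELPRule (Lit β)} (hr : r ∈ P) :
    trRule r ∈ translation P ∪ aspFacts P Φ :=
  Or.inl (Or.inl (Or.inl ⟨r, hr, rfl⟩))

lemma kAux1_mem {l : Lit β} (hl : EpNeg.notK l ∈ Ep P) :
    kAux1 l ∈ translation P ∪ aspFacts P Φ :=
  Or.inl (Or.inl (Or.inr ⟨l, hl, Or.inl rfl⟩))

lemma kAux2_mem {l : Lit β} (hl : EpNeg.notK l ∈ Ep P) :
    kAux2 l ∈ translation P ∪ aspFacts P Φ :=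
  Or.inl (Or.inl (Or.inr ⟨l, hl, Or.inr rfl⟩))

lemma mAux1_mem {l : Lit β} (hl : EpNeg.m l ∈ Ep P) :
    mAux1 l ∈ translation P ∪ aspFacts P Φ :=
  Or.inl (Or.inr ⟨l, hl, Or.inl rfl⟩)

lemma mAux2_mem {l : Lit β} (hl : EpNeg.m l ∈ Ep P) :
    mAux2 l ∈ translation P ∪ aspFacts P Φ :=
  Or.inl (Or.inr ⟨l, hl, Or.inr rfl⟩)

lemma factk0_mem {l : Lit β} (hl : EpNeg.notK l ∈ Ep P) (hΦ : EpNeg.notK l ∈ Φ) :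
    factRule (Lit.pos (XAtom.k0 l)) ∈ translation P ∪ aspFacts P Φ :=
  Or.inr (Or.inl ⟨l, hl, Or.inl ⟨hΦ, rfl⟩⟩)

lemma factk1_mem {l : Lit β} (hl : EpNeg.notK l ∈ Ep P) (hΦ : EpNeg.notK l ∉ Φ) :
    factRule (Lit.pos (XAtom.k1 l)) ∈ translation P ∪ aspFacts P Φ :=
  Or.inr (Or.inl ⟨l, hl, Or.inr ⟨hΦ, rfl⟩⟩)

lemma factm1_mem {l : Lit β} (hl : EpNeg.m l ∈ Ep P) (hΦ : EpNeg.m l ∈ Φ) :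
    factRule (Lit.pos (XAtom.m1 l)) ∈ translation P ∪ aspFacts P Φ :=
  Or.inr (Or.inr ⟨l, hl, Or.inl ⟨hΦ, rfl⟩⟩)

lemma factm0_mem {l : Lit β} (hl : EpNeg.m l ∈ Ep P) (hΦ : EpNeg.m l ∉ Φ) :
    factRule (Lit.pos (XAtom.m0 l)) ∈ translation P ∪ aspFacts P Φ :=
  Or.inr (Or.inr ⟨l, hl, Or.inr ⟨hΦ, rfl⟩⟩)

/-! Generic helpers for extracting consequences from `modelOf`. -/

lemma modelOf_rule {γ : Type u} {T A : Set γ} {Rs : Set (NRule γ)}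
    (hmod : modelOf T (progGLReduct Rs A)) {R : NRule γ} (hR : R ∈ Rs)
    (hneg : ∀ l ∈ R.neg, l ∉ A) (hnn : ∀ l ∈ R.nneg, l ∈ A)
    (hbot : ¬ R.bot) (hpos : R.pos ⊆ T) : ∃ h ∈ R.head, h ∈ T :=
  hmod ⟨R.head, R.pos, R.bot⟩ ⟨R, hR, hneg, hnn, rfl⟩ hbot hpos

lemma modelOf_fact {γ : Type u} {T A : Set γ} {Rs : Set (NRule γ)}
    (hmod : modelOf T (progGLReduct Rs A)) {a : γ} (ha : factRule a ∈ Rs) : a ∈ T := by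
  obtain ⟨h, hh, hT⟩ := modelOf_rule hmod ha
    (fun l hl => absurd hl (Set.notMem_empty l))
    (fun l hl => absurd hl (Set.notMem_empty l))
    (fun h => h) (Set.empty_subset T)
  simp only [factRule, Set.mem_singleton_iff] at hh
  exact hh ▸ hT


/-! The three main correspondence lemmas. -/

lemma M1 {B B₀ : Set (Lit β)}
    (hmod : modelOf B₀ (progGLReduct (epProgReduct P Φ) B)) :
    modelOf (emb '' B₀ ∪ {x | extFresh P Φ B x})
      (progGLReduct (translation P ∪ aspFacts P Φ) (XS P Φ B)) := by
  rintro Q ⟨R, hR, hneg, hnn, rfl⟩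
  rcases hR with (((⟨r, hr, rfl⟩ | ⟨l, hl, rfl | rfl⟩) | ⟨l, hl, rfl | rfl⟩) |
    (⟨l, hl, ⟨hΦl, rfl⟩ | ⟨hΦl, rfl⟩⟩ | ⟨l, hl, ⟨hΦl, rfl⟩ | ⟨hΦl, rfl⟩⟩))
  · -- translated program rule
    intro _ hpos
    have h1 : ∀ l ∈ r.bneg, l ∉ B := fun l hl hlB =>
      hneg (emb l) (Or.inl (Or.inl ⟨l, hl, rfl⟩)) (Or.inl ⟨l, hlB, rfl⟩)
    have h2 : ∀ l ∈ r.L1, EpNeg.notK l ∉ Φ ∧ l ∈ B := by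
      intro l hl
      have hEp := notK_mem_Ep hr (Or.inl hl)
      have hnot : ¬ (EpNeg.notK l ∈ Φ ∨ l ∉ B) := fun hc =>
        hneg (Lit.neg (XAtom.k l)) (Or.inl (Or.inr ⟨l, hl, rfl⟩))
          ((negk_mem_union l).mpr ⟨hEp, hc⟩)
      refine ⟨fun h => hnot (Or.inl h), ?_⟩
      by_contra hnB
      exact hnot (Or.inr hnB)
    have h3 : ∀ l ∈ r.L4, EpNeg.m l ∉ Φ ∧ l ∉ B := by
      intro l hl
      have hEp := m_mem_Ep hr (Or.inr hl)
      have hnot : ¬ (EpNeg.m l ∈ Φ ∨ l ∈ B) := fun hc =>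
        hneg (Lit.pos (XAtom.m l)) (Or.inr ⟨l, hl, rfl⟩)
          ((posm_mem_union l).mpr ⟨hEp, hc⟩)
      exact ⟨fun h => hnot (Or.inl h), fun h => hnot (Or.inr h)⟩
    have hbpos : ∀ l ∈ r.bpos, l ∈ B₀ := by
      intro l hl
      have hx : emb l ∈ (trRule r).pos := Or.inl (Or.inl (Or.inl ⟨l, hl, rfl⟩))
      exact (emb_mem_union l).mp (hpos hx)
    have hL1B : ∀ l ∈ r.L1, l ∈ B₀ := by
      intro l hl
      have hx : emb l ∈ (trRule r).pos := Or.inl (Or.inl (Or.inr ⟨l, hl, rfl⟩))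
      exact (emb_mem_union l).mp (hpos hx)
    have hL2 : ∀ l ∈ r.L2, EpNeg.notK l ∈ Φ ∨ l ∉ B := by
      intro l hl
      have hx : Lit.neg (XAtom.k l) ∈ (trRule r).pos := Or.inl (Or.inr ⟨l, hl, rfl⟩)
      exact ((negk_mem_union l).mp (hpos hx)).2
    have hL3 : ∀ l ∈ r.L3, EpNeg.m l ∈ Φ ∨ l ∈ B := by
      intro l hl
      have hx : Lit.pos (XAtom.m l) ∈ (trRule r).pos := Or.inr ⟨l, hl, rfl⟩
      exact ((posm_mem_union l).mp (hpos hx)).2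
    have hQ' : (⟨r.head, r.bpos ∪ r.L1, False⟩ : PRule (Lit β)) ∈
        progGLReduct (epProgReduct P Φ) B := by
      refine ⟨⟨r.head, r.bpos ∪ r.L1,
        r.bneg ∪ {l ∈ r.L2 | EpNeg.notK l ∉ Φ} ∪ r.L4,
        {l ∈ r.L3 | EpNeg.m l ∉ Φ}, False⟩,
        ⟨r, hr, fun l hl => ⟨notK_mem_Ep hr (Or.inl hl), (h2 l hl).1⟩,
          fun l hl => ⟨m_mem_Ep hr (Or.inr hl), (h3 l hl).1⟩, rfl⟩, ?_, ?_, rfl⟩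
      · rintro x ((hx | ⟨hx2, hxΦ⟩) | hx4)
        · exact h1 x hx
        · rcases hL2 x hx2 with h | h
          · exact absurd h hxΦ
          · exact h
        · exact (h3 x hx4).2
      · rintro x ⟨hx3, hxΦ⟩
        rcases hL3 x hx3 with h | h
        · exact absurd h hxΦ
        · exact h
    obtain ⟨h, hh, hhB⟩ := hmod _ hQ' (fun h => h)
      (by rintro x (hx | hx)
          exacts [hbpos x hx, hL1B x hx])
    exact ⟨emb h, ⟨h, hh, rfl⟩, Or.inl ⟨h, hhB, rfl⟩⟩
  · -- kAux1
    intro _ hpos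
    have hk0 := (posk0_mem_union (B := B) l).mp (hpos (Set.mem_singleton _))
    exact ⟨Lit.neg (XAtom.k l), Set.mem_singleton _,
      (negk_mem_union l).mpr ⟨hl, Or.inl hk0.2⟩⟩
  · -- kAux2
    have hlB : l ∉ B := fun hlB =>
      hneg (emb l) (Set.mem_singleton _) ((emb_mem_union l).mpr hlB)
    intro _ hpos
    exact ⟨Lit.neg (XAtom.k l), Set.mem_singleton _,
      (negk_mem_union l).mpr ⟨hl, Or.inr hlB⟩⟩
  · -- mAux1
    intro _ hpos
    have hm1 := (posm1_mem_union (B := B) l).mp (hpos (Set.mem_singleton _))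
    exact ⟨Lit.pos (XAtom.m l), Set.mem_singleton _,
      (posm_mem_union l).mpr ⟨hl, Or.inl hm1.2⟩⟩
  · -- mAux2
    have hlB : l ∈ B := (emb_mem_union l).mp (hnn (emb l) (Set.mem_singleton _))
    intro _ hpos
    exact ⟨Lit.pos (XAtom.m l), Set.mem_singleton _,
      (posm_mem_union l).mpr ⟨hl, Or.inr hlB⟩⟩
  · -- fact k0
    intro _ _
    exact ⟨Lit.pos (XAtom.k0 l), Set.mem_singleton _,
      (posk0_mem_union l).mpr ⟨hl, hΦl⟩⟩
  · -- fact k1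
    intro _ _
    exact ⟨Lit.pos (XAtom.k1 l), Set.mem_singleton _,
      (posk1_mem_union l).mpr ⟨hl, hΦl⟩⟩
  · -- fact m1
    intro _ _
    exact ⟨Lit.pos (XAtom.m1 l), Set.mem_singleton _,
      (posm1_mem_union l).mpr ⟨hl, hΦl⟩⟩
  · -- fact m0
    intro _ _
    exact ⟨Lit.pos (XAtom.m0 l), Set.mem_singleton _,
      (posm0_mem_union l).mpr ⟨hl, hΦl⟩⟩

lemma M2a {T A' : Set (Lit (XAtom β))} (hA : ∀ l : Lit β, emb l ∈ A' ↔ l ∈ B)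
    (hmod : modelOf T (progGLReduct (translation P ∪ aspFacts P Φ) A')) :
    {x | extFresh P Φ B x} ⊆ T := by
  have hk0 : ∀ l : Lit β, EpNeg.notK l ∈ Ep P → EpNeg.notK l ∈ Φ →
      Lit.pos (XAtom.k0 l) ∈ T := fun l h1 h2 => modelOf_fact hmod (factk0_mem h1 h2)
  have hk1 : ∀ l : Lit β, EpNeg.notK l ∈ Ep P → EpNeg.notK l ∉ Φ →
      Lit.pos (XAtom.k1 l) ∈ T := fun l h1 h2 => modelOf_fact hmod (factk1_mem h1 h2)
  have hm1 : ∀ l : Lit β, EpNeg.m l ∈ Ep P → EpNeg.m l ∈ Φ →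
      Lit.pos (XAtom.m1 l) ∈ T := fun l h1 h2 => modelOf_fact hmod (factm1_mem h1 h2)
  have hm0 : ∀ l : Lit β, EpNeg.m l ∈ Ep P → EpNeg.m l ∉ Φ →
      Lit.pos (XAtom.m0 l) ∈ T := fun l h1 h2 => modelOf_fact hmod (factm0_mem h1 h2)
  intro x hx
  obtain a | a := x
  · cases a with
    | orig b => exact (show False from hx).elim
    | k l => exact (show False from hx).elim
    | k0 l => obtain ⟨h1, h2⟩ := hx; exact hk0 l h1 h2
    | k1 l => obtain ⟨h1, h2⟩ := hx; exact hk1 l h1 h2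
    | m l =>
        obtain ⟨h1, h2⟩ := hx
        by_cases hΦl : EpNeg.m l ∈ Φ
        · obtain ⟨h, hh, hT⟩ := modelOf_rule hmod (mAux1_mem h1)
            (fun x hx => absurd hx (Set.notMem_empty x))
            (fun x hx => absurd hx (Set.notMem_empty x))
            (fun h => h) (Set.singleton_subset_iff.mpr (hm1 l h1 hΦl))
          simp only [mAux1, Set.mem_singleton_iff] at hh
          exact hh ▸ hT
        · have hlB : l ∈ B := h2.resolve_left hΦl
          obtain ⟨h, hh, hT⟩ := modelOf_rule hmod (mAux2_mem h1)
            (fun x hx => absurd hx (Set.notMem_empty x))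
            (by intro x hx
                simp only [mAux2, Set.mem_singleton_iff] at hx
                subst hx
                exact (hA l).mpr hlB)
            (fun h => h) (Set.singleton_subset_iff.mpr (hm0 l h1 hΦl))
          simp only [mAux2, Set.mem_singleton_iff] at hh
          exact hh ▸ hT
    | m0 l => obtain ⟨h1, h2⟩ := hx; exact hm0 l h1 h2
    | m1 l => obtain ⟨h1, h2⟩ := hx; exact hm1 l h1 h2
  · cases a with
    | orig b => exact (show False from hx).elim
    | k l =>
        obtain ⟨h1, h2⟩ := hx
        by_cases hΦl : EpNeg.notK l ∈ Φ
        · obtain ⟨h, hh, hT⟩ := modelOf_rule hmod (kAux1_mem h1)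
            (fun x hx => absurd hx (Set.notMem_empty x))
            (fun x hx => absurd hx (Set.notMem_empty x))
            (fun h => h) (Set.singleton_subset_iff.mpr (hk0 l h1 hΦl))
          simp only [kAux1, Set.mem_singleton_iff] at hh
          exact hh ▸ hT
        · have hlB : l ∉ B := h2.resolve_left hΦl
          obtain ⟨h, hh, hT⟩ := modelOf_rule hmod (kAux2_mem h1)
            (by intro x hx
                simp only [kAux2, Set.mem_singleton_iff] at hx
                subst hx
                exact fun hm => hlB ((hA l).mp hm))
            (fun x hx => absurd hx (Set.notMem_empty x))
            (fun h => h) (Set.singleton_subset_iff.mpr (hk1 l h1 hΦl))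
          simp only [kAux2, Set.mem_singleton_iff] at hh
          exact hh ▸ hT
    | k0 l => exact (show False from hx).elim
    | k1 l => exact (show False from hx).elim
    | m l => exact (show False from hx).elim
    | m0 l => exact (show False from hx).elim
    | m1 l => exact (show False from hx).elim

lemma M2b {T : Set (Lit (XAtom β))} (hT : T ⊆ XS P Φ B)
    (hmod : modelOf T (progGLReduct (translation P ∪ aspFacts P Φ) (XS P Φ B))) :
    modelOf {l : Lit β | emb l ∈ T} (progGLReduct (epProgReduct P Φ) B) := by
  have hfresh : {x | extFresh P Φ B x} ⊆ T := M2a (fun l => emb_mem_union l) hmod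
  rintro Q ⟨R, ⟨r, hr, hL1, hL4, rfl⟩, hneg, hnn, rfl⟩
  intro _ hpos
  have hbnegB : ∀ l ∈ r.bneg, l ∉ B := fun l hl => hneg l (Or.inl (Or.inl hl))
  have hL2B : ∀ l ∈ r.L2, EpNeg.notK l ∉ Φ → l ∉ B := fun l hl hΦl =>
    hneg l (Or.inl (Or.inr ⟨hl, hΦl⟩))
  have hL4B : ∀ l ∈ r.L4, l ∉ B := fun l hl => hneg l (Or.inr hl)
  have hL3B : ∀ l ∈ r.L3, EpNeg.m l ∉ Φ → l ∈ B := fun l hl hΦl => hnn l ⟨hl, hΦl⟩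
  have hposT : (trRule r).pos ⊆ T := by
    rintro x (((⟨l, hl, rfl⟩ | ⟨l, hl, rfl⟩) | ⟨l, hl, rfl⟩) | ⟨l, hl, rfl⟩)
    · exact hpos (Or.inl hl)
    · exact hpos (Or.inr hl)
    · exact hfresh (show extFresh P Φ B (Lit.neg (XAtom.k l)) from
        ⟨notK_mem_Ep hr (Or.inr hl), or_iff_not_imp_left.mpr (hL2B l hl)⟩)
    · exact hfresh (show extFresh P Φ B (Lit.pos (XAtom.m l)) from
        ⟨m_mem_Ep hr (Or.inl hl), or_iff_not_imp_left.mpr (hL3B l hl)⟩)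
  have hnegA : ∀ x ∈ (trRule r).neg, x ∉ XS P Φ B := by
    rintro x ((⟨l, hl, rfl⟩ | ⟨l, hl, rfl⟩) | ⟨l, hl, rfl⟩)
    · exact fun hm => hbnegB l hl ((emb_mem_union l).mp hm)
    · intro hm
      obtain ⟨-, h2⟩ := (negk_mem_union l).mp hm
      have hlB : l ∈ B := (emb_mem_union l).mp (hT (hpos (Or.inr hl)))
      rcases h2 with h | h
      · exact (hL1 l hl).2 h
      · exact h hlB
    · intro hm
      obtain ⟨-, h2⟩ := (posm_mem_union l).mp hm
      rcases h2 with h | h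
      · exact (hL4 l hl).2 h
      · exact hL4B l hl h
  obtain ⟨h, hh, hT'⟩ := modelOf_rule hmod (trRule_mem hr) hnegA
    (fun x hx => absurd hx (Set.notMem_empty x)) (fun h => h) hposT
  obtain ⟨h0, hh0, rfl⟩ := hh
  exact ⟨h0, hh0, hT'⟩

lemma M3 {A : Set (Lit (XAtom β))}
    (hmodA : modelOf A (progGLReduct (translation P ∪ aspFacts P Φ) A)) :
    XS P Φ {l : Lit β | emb l ∈ A} ⊆ A ∧
      modelOf (XS P Φ {l : Lit β | emb l ∈ A})
        (progGLReduct (translation P ∪ aspFacts P Φ) A) := by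
  have hsub : XS P Φ {l : Lit β | emb l ∈ A} ⊆ A := by
    rintro x (⟨l, hl, rfl⟩ | hx)
    · exact hl
    · exact M2a (B := {l : Lit β | emb l ∈ A}) (fun l => Iff.rfl) hmodA hx
  refine ⟨hsub, ?_⟩
  rintro Q ⟨R, hR, hneg, hnn, rfl⟩
  rcases hR with (((⟨r, hr, rfl⟩ | ⟨l, hl, rfl | rfl⟩) | ⟨l, hl, rfl | rfl⟩) |
    (⟨l, hl, ⟨hΦl, rfl⟩ | ⟨hΦl, rfl⟩⟩ | ⟨l, hl, ⟨hΦl, rfl⟩ | ⟨hΦl, rfl⟩⟩))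
  · -- translated rule
    intro _ hpos
    obtain ⟨h, hh, hA⟩ := hmodA _ ⟨trRule r, trRule_mem hr, hneg, hnn, rfl⟩
      (fun h => h) (hpos.trans hsub)
    obtain ⟨h0, hh0, rfl⟩ := hh
    exact ⟨emb h0, ⟨h0, hh0, rfl⟩, Or.inl ⟨h0, hA, rfl⟩⟩
  · -- kAux1
    intro _ hpos
    have hk0 := (posk0_mem_union (B := {l : Lit β | emb l ∈ A}) l).mp
      (hpos (Set.mem_singleton _))
    exact ⟨Lit.neg (XAtom.k l), Set.mem_singleton _,
      (negk_mem_union l).mpr ⟨hl, Or.inl hk0.2⟩⟩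
  · -- kAux2
    have hlB : l ∉ {l : Lit β | emb l ∈ A} := fun hlB =>
      hneg (emb l) (Set.mem_singleton _) hlB
    intro _ hpos
    exact ⟨Lit.neg (XAtom.k l), Set.mem_singleton _,
      (negk_mem_union l).mpr ⟨hl, Or.inr hlB⟩⟩
  · -- mAux1
    intro _ hpos
    have hm1 := (posm1_mem_union (B := {l : Lit β | emb l ∈ A}) l).mp
      (hpos (Set.mem_singleton _))
    exact ⟨Lit.pos (XAtom.m l), Set.mem_singleton _,
      (posm_mem_union l).mpr ⟨hl, Or.inl hm1.2⟩⟩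
  · -- mAux2
    have hlB : l ∈ {l : Lit β | emb l ∈ A} := hnn (emb l) (Set.mem_singleton _)
    intro _ hpos
    exact ⟨Lit.pos (XAtom.m l), Set.mem_singleton _,
      (posm_mem_union l).mpr ⟨hl, Or.inr hlB⟩⟩
  · intro _ _
    exact ⟨Lit.pos (XAtom.k0 l), Set.mem_singleton _,
      (posk0_mem_union l).mpr ⟨hl, hΦl⟩⟩
  · intro _ _
    exact ⟨Lit.pos (XAtom.k1 l), Set.mem_singleton _,
      (posk1_mem_union l).mpr ⟨hl, hΦl⟩⟩
  · intro _ _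
    exact ⟨Lit.pos (XAtom.m1 l), Set.mem_singleton _,
      (posm1_mem_union l).mpr ⟨hl, hΦl⟩⟩
  · intro _ _
    exact ⟨Lit.pos (XAtom.m0 l), Set.mem_singleton _,
      (posm0_mem_union l).mpr ⟨hl, hΦl⟩⟩


end KMTrans

/-- **Correctness of the translation.** For `Φ ⊆ Ep(Π)`, the answer sets of
`Π″ = Π′ ∪ ASP(Φ)`, taken modulo the fresh k/m-literals (i.e. restricted to the
original literals of `Π`), are exactly the answer sets of the epistemic reduct `Π^Φ`. -/
theorem translation_answer_sets_modulo_km_eq_epistemicReduct_answer_sets {β : Type u}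
    (Prog : Set (ELPRule (Lit β))) (hProgFin : Prog.Finite)
    (hRulesFin : ∀ r ∈ Prog, r.RuleFinite)
    (Φ : Set (EpNeg (Lit β))) (hΦ : Φ ⊆ Ep Prog) :
    {B : Set (Lit β) | ∃ A ∈ ASL (translation Prog ∪ aspFacts Prog Φ),
        B = {l : Lit β | emb l ∈ A}} =
      ASL (epProgReduct Prog Φ) := by
  classical
  ext B
  simp only [Set.mem_setOf_eq]
  constructor
  · rintro ⟨A, ⟨hconsA, hmodA, hminA⟩, rfl⟩
    obtain ⟨hsub, hmodXS⟩ := KMTrans.M3 (P := Prog) (Φ := Φ) hmodA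
    have hAeq : KMTrans.XS Prog Φ {l : Lit β | emb l ∈ A} = A := by
      by_contra hne
      exact hminA _ (hsub.ssubset_of_ne hne) hmodXS
    refine ⟨?_, ?_, ?_⟩
    · intro a ⟨hp, hn⟩
      exact hconsA (XAtom.orig a) ⟨hp, hn⟩
    · have h1 : A ⊆ KMTrans.XS Prog Φ {l : Lit β | emb l ∈ A} := by rw [hAeq]
      have h2 : modelOf A (progGLReduct (translation Prog ∪ aspFacts Prog Φ)
          (KMTrans.XS Prog Φ {l : Lit β | emb l ∈ A})) := by rw [hAeq]; exact hmodA
      exact KMTrans.M2b h1 h2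
    · intro B' hB' hmodB'
      have hmodT := KMTrans.M1 (P := Prog) (Φ := Φ) (B := {l : Lit β | emb l ∈ A}) hmodB'
      rw [hAeq] at hmodT
      obtain ⟨l, hlB, hlB'⟩ := Set.exists_of_ssubset hB'
      refine hminA (emb '' B' ∪ {x | KMTrans.extFresh Prog Φ {l : Lit β | emb l ∈ A} x})
        ?_ hmodT
      have hsub2 : emb '' B' ∪ {x | KMTrans.extFresh Prog Φ {l : Lit β | emb l ∈ A} x}
          ⊆ A := by
        rintro x (⟨l', hl', rfl⟩ | hx)
        · exact hsub (Or.inl ⟨l', hB'.subset hl', rfl⟩)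
        · exact hsub (Or.inr hx)
      refine (Set.ssubset_iff_of_subset hsub2).mpr ⟨emb l, hlB, ?_⟩
      rintro (⟨y, hy, he⟩ | hf)
      · exact hlB' (KMTrans.emb_inj he ▸ hy)
      · exact KMTrans.extFresh_emb l hf
  · rintro ⟨hconsB, hmodB, hminB⟩
    refine ⟨KMTrans.XS Prog Φ B, ⟨KMTrans.consistent_XS hconsB, ?_, ?_⟩,
      KMTrans.orig_XS.symm⟩
    · exact KMTrans.M1 hmodB
    · intro B' hB' hmodB'
      have hfresh : {x | KMTrans.extFresh Prog Φ B x} ⊆ B' :=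
        KMTrans.M2a (fun l => KMTrans.emb_mem_union l) hmodB'
      have hB'sub : B' ⊆ KMTrans.XS Prog Φ B := hB'.subset
      have hmodB0 := KMTrans.M2b hB'sub hmodB'
      have hB0sub : {l : Lit β | emb l ∈ B'} ⊆ B := fun l hl =>
        (KMTrans.emb_mem_union l).mp (hB'sub hl)
      refine hminB {l : Lit β | emb l ∈ B'} (hB0sub.ssubset_of_ne ?_) hmodB0
      intro heq
      obtain ⟨x, hxXS, hxB'⟩ := Set.exists_of_ssubset hB'
      rcases hxXS with ⟨l, hlB, rfl⟩ | hx
      · have : l ∈ {l : Lit β | emb l ∈ B'} := by rw [heq]; exact hlB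
        exact hxB' this
      · exact hxB' (hfresh hx)
end
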